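/- Let R be a TRS over a finite signature F that is compatible with some Δ-linear interpretation. Then R is terminating, and there exists c ∈ ℕ such that for every term t ∈ T(F,V), every →_R-derivation starting from t has length at most 2^{c·|t|}. -/

import Mathlib

/-- First-order terms over a signature `F` (with arity function `ar`) and variables `V`. -/
inductive Tm (F : Type) (ar : F → ℕ) (V : Type) : Type where
  | var : V → Tm F ar V
  | fn : (f : F) → (Fin (ar f) → Tm F ar V) → Tm F ar V

namespace Tm

variable {F : Type} {ar : F → ℕ} {V : Type}

/-- The size of a term: the number of occurrences of variables and function symbols. -/
def size : Tm F ar V → ℕ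
  | var _ => 1
  | fn _ ts => 1 + ∑ i, (ts i).size

/-- Number of occurrences of the variable `x` in a term. -/
def count [DecidableEq V] (x : V) : Tm F ar V → ℕ
  | var y => if y = x then 1 else 0
  | fn _ ts => ∑ i, (ts i).count x

/-- Application of a substitution to a term. -/
def subst (σ : V → Tm F ar V) : Tm F ar V → Tm F ar V
  | var x => σ x
  | fn f ts => fn f fun i => (ts i).subst σ

end Tm

/-- `R` is a term rewrite system: left-hand sides are not variables and every variable
of a right-hand side occurs in the corresponding left-hand side. -/
def IsTRS {F : Type} {ar : F → ℕ} (R : Set (Tm F ar ℕ × Tm F ar ℕ)) : Prop :=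
  ∀ p ∈ R, (∀ x : ℕ, p.1 ≠ Tm.var x) ∧
    ∀ x : ℕ, 0 < Tm.count x p.2 → 0 < Tm.count x p.1

/-- The rewrite relation of `R`: the closure of the rules under contexts and
substitutions. -/
inductive Rew {F : Type} {ar : F → ℕ} (R : Set (Tm F ar ℕ × Tm F ar ℕ)) :
    Tm F ar ℕ → Tm F ar ℕ → Prop
  | rule {l r} (σ : ℕ → Tm F ar ℕ) : (l, r) ∈ R → Rew R (l.subst σ) (r.subst σ)
  | congr {f} {ts : Fin (ar f) → Tm F ar ℕ} (i) {t'} :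
      Rew R (ts i) t' → Rew R (.fn f ts) (.fn f (Function.update ts i t'))

/-- A `ρ`-derivation of length `n`: `d 0 → d 1 → ⋯ → d n`. -/
def ChainOf {A : Type} (ρ : A → A → Prop) (n : ℕ) (d : ℕ → A) : Prop :=
  ∀ i < n, ρ (d i) (d (i + 1))

/-- A Δ-linear interpretation for a signature `F` with arity function `ar`. -/
structure DeltaLin (F : Type) (ar : F → ℕ) where
  a : (f : F) → Fin (ar f) → ℕ
  b : (f : F) → Fin (ar f) → ℕ
  c : F → ℕ
  d : F → ℕ
  pos : ∀ f i, 1 ≤ a f i + b f i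

namespace DeltaLin

variable {F : Type} {ar : F → ℕ}

/-- The interpretation function
`f[Δ](z₁,…,zₙ) = Σᵢ a_{f,i}·zᵢ + Σᵢ b_{f,i}·zᵢ·Δ + c_f·Δ + d_f`. -/
noncomputable def fA (C : DeltaLin F ar) (f : F) (Δ : ℝ) (z : Fin (ar f) → ℝ) : ℝ :=
  (∑ i, (C.a f i : ℝ) * z i) + (∑ i, (C.b f i : ℝ) * z i * Δ) +
    (C.c f : ℝ) * Δ + (C.d f : ℝ)

/-- The parameter function `f^i(Δ) = Δ/(a_{f,i} + b_{f,i}·Δ)`. -/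
noncomputable def par (C : DeltaLin F ar) (f : F) (i : Fin (ar f)) (Δ : ℝ) : ℝ :=
  Δ / ((C.a f i : ℝ) + (C.b f i : ℝ) * Δ)

/-- Evaluation of a term under a Δ-assignment `α` (mapping each `Δ` and each variable
to a real): `[α,Δ](x) = α(Δ,x)` and
`[α,Δ](f(t₁,…,tₙ)) = f[Δ]([α,f¹(Δ)](t₁),…,[α,fⁿ(Δ)](tₙ))`. -/
noncomputable def evalA (C : DeltaLin F ar) (α : ℝ → ℕ → ℝ) : Tm F ar ℕ → ℝ → ℝ
  | .var x, Δ => α Δ x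
  | .fn f ts, Δ => C.fA f Δ fun i => evalA C α (ts i) (C.par f i Δ)

/-- Compatibility of the interpretation with a TRS `R`:
`[α,Δ](l) − [α,Δ](r) ≥ Δ` for every rule `l → r ∈ R`, every `Δ > 0` and every
Δ-assignment `α` with nonnegative values. -/
def Compat (C : DeltaLin F ar) (R : Set (Tm F ar ℕ × Tm F ar ℕ)) : Prop :=
  ∀ p ∈ R, ∀ Δ : ℝ, 0 < Δ → ∀ α : ℝ → ℕ → ℝ, (∀ Δ' x, 0 ≤ α Δ' x) →
    Δ ≤ C.evalA α p.1 Δ - C.evalA α p.2 Δ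

end DeltaLin

/-!
Compatibility at `Δ` makes every rewrite step decrease `[α,Δ](·)` by at least `Δ`: a step at
the root is compatibility applied to the assignment induced by the substitution, and a step
inside the `i`-th argument of `f` decreases the value of that argument, taken at `f^i(Δ)`, by at
least `f^i(Δ)`, which the factor `a_{f,i} + b_{f,i}·Δ` in `f[Δ]` turns into a decrease of at
least `Δ`. So `[0,1](t)` bounds the length of every derivation from `t`. All parameters stay in
`[0,1]`, so `[0,1](t) ≤ K^|t|` where `K` bounds `Σᵢ (a_{f,i} + b_{f,i}) + c_f + d_f` over the
finite signature, and `K^|t| ≤ 2^(K·|t|)`.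
-/

theorem Fintype.sum_mul_update {ι R : Type*} [Fintype ι] [DecidableEq ι] [CommRing R]
    (g z : ι → R) (i : ι) (w : R) : ∑ j, g j * Function.update z i w j = ∑ j, g j * z j + g i * (w - z i) := by
  have hupdate : ∀ j, g j * Function.update z i w j =
      Function.update (fun j => g j * z j) i (g i * w) j := by
    intro j
    rcases eq_or_ne j i with rfl | hj <;> simp [*]
  simp only [hupdate, Finset.sum_update_of_mem (Finset.mem_univ i),
    Fintype.sum_eq_add_sum_compl i (fun j => g j * z j), Finset.compl_eq_univ_sdiff]
  ring

section Potential

variable {A : Type} {ρ : A → A → Prop} (φ : A → ℝ)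

theorem ChainOf.length_le (hφ : ∀ a, 0 ≤ φ a) (hρ : ∀ a b, ρ a b → φ b + 1 ≤ φ a)
    {m : ℕ} {d : ℕ → A} (h : ChainOf ρ m d) : (m : ℝ) ≤ φ (d 0) := by
  have hprefix : ∀ n ≤ m, φ (d n) + n ≤ φ (d 0) := by
    intro n
    induction n with
    | zero => simp
    | succ n ih =>
      intro hn
      have := hρ _ _ (h n (by omega))
      push_cast
      linarith [ih (by omega)]
  linarith [hprefix m le_rfl, hφ (d m)]

theorem not_exists_infinite_chain (hφ : ∀ a, 0 ≤ φ a) (hρ : ∀ a b, ρ a b → φ b + 1 ≤ φ a) :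
    ¬ ∃ d : ℕ → A, ∀ i, ρ (d i) (d (i + 1)) := by
  rintro ⟨d, hd⟩
  obtain ⟨n, hn⟩ := exists_nat_gt (φ (d 0))
  exact hn.not_ge (ChainOf.length_le φ hφ hρ fun i _ => hd i)

end Potential

namespace DeltaLin

variable {F : Type} {ar : F → ℕ} (C : DeltaLin F ar)

def weight (f : F) : ℕ :=
  ∑ i, (C.a f i + C.b f i) + C.c f + C.d f

variable {f : F} {i : Fin (ar f)} {Δ : ℝ}

theorem coef_pos (hΔ : 0 < Δ) : 0 < (C.a f i : ℝ) + C.b f i * Δ := by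
  have hab := C.pos f i
  by_cases ha : C.a f i = 0
  · have hb : 0 < C.b f i := by omega
    simp only [ha, Nat.cast_zero, zero_add]
    positivity
  · have : 0 < C.a f i := Nat.pos_of_ne_zero ha
    positivity

theorem par_pos (hΔ : 0 < Δ) : 0 < C.par f i Δ :=
  div_pos hΔ (C.coef_pos hΔ)

theorem par_nonneg (hΔ : 0 ≤ Δ) : 0 ≤ C.par f i Δ := by
  unfold par
  positivity

theorem par_le_one (hΔ0 : 0 ≤ Δ) (hΔ1 : Δ ≤ 1) : C.par f i Δ ≤ 1 := by
  obtain rfl | hΔ := hΔ0.eq_or_lt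
  · simp [par]
  rw [par, div_le_one (C.coef_pos hΔ)]
  have hab : (1 : ℝ) ≤ C.a f i + C.b f i := by exact_mod_cast C.pos f i
  calc Δ ≤ ((C.a f i : ℝ) + C.b f i) * Δ := le_mul_of_one_le_left hΔ.le hab
    _ = C.a f i * Δ + C.b f i * Δ := add_mul _ _ _
    _ ≤ C.a f i + C.b f i * Δ := by gcongr; exact mul_le_of_le_one_right (by positivity) hΔ1

theorem coef_mul_par (hΔ : 0 < Δ) : ((C.a f i : ℝ) + C.b f i * Δ) * C.par f i Δ = Δ :=
  mul_div_cancel₀ _ (C.coef_pos hΔ).ne'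

theorem fA_eq_sum (f : F) (Δ : ℝ) (z : Fin (ar f) → ℝ) :
    C.fA f Δ z = ∑ j, ((C.a f j : ℝ) + C.b f j * Δ) * z j + C.c f * Δ + C.d f := by
  simp only [fA, add_mul, Finset.sum_add_distrib, mul_right_comm _ Δ]

theorem fA_update (f : F) (Δ : ℝ) (z : Fin (ar f) → ℝ) (i : Fin (ar f)) (w : ℝ) :
    C.fA f Δ (Function.update z i w) =
      C.fA f Δ z + ((C.a f i : ℝ) + C.b f i * Δ) * (w - z i) := by
  rw [fA_eq_sum, fA_eq_sum, Fintype.sum_mul_update]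
  ring

theorem fA_nonneg {z : Fin (ar f) → ℝ} (hΔ : 0 ≤ Δ) (hz : ∀ j, 0 ≤ z j) : 0 ≤ C.fA f Δ z := by
  rw [fA_eq_sum]
  exact add_nonneg (add_nonneg (Finset.sum_nonneg fun j _ => mul_nonneg (by positivity) (hz j))
    (by positivity)) (by positivity)

theorem fA_le_weight_mul {z : Fin (ar f) → ℝ} {B : ℝ} (hΔ1 : Δ ≤ 1)
    (hB : 1 ≤ B) (hz0 : ∀ j, 0 ≤ z j) (hzB : ∀ j, z j ≤ B) :
    C.fA f Δ z ≤ C.weight f * B := by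
  calc C.fA f Δ z
      ≤ ∑ j, ((C.a f j : ℝ) + C.b f j) * B + C.c f * B + C.d f * B := by
        rw [fA_eq_sum]
        gcongr with j
        · exact hz0 j
        · exact mul_le_of_le_one_right (by positivity) hΔ1
        · exact hzB j
        · exact hΔ1.trans hB
        · exact le_mul_of_one_le_right (by positivity) hB
    _ = C.weight f * B := by
        simp only [weight, ← Finset.sum_mul]
        push_cast
        ring

theorem evalA_nonneg {α : ℝ → ℕ → ℝ} (hα : ∀ Δ' x, 0 ≤ α Δ' x) (t : Tm F ar ℕ) {Δ : ℝ}
    (hΔ : 0 ≤ Δ) : 0 ≤ C.evalA α t Δ := by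
  induction t generalizing Δ with
  | var x => exact hα Δ x
  | fn f ts ih =>
    exact C.fA_nonneg hΔ fun j => ih j (C.par_nonneg hΔ)

/-- The `max` keeps the induced assignment nonnegative at negative arguments too, as `Compat`
requires. -/
theorem evalA_subst (α : ℝ → ℕ → ℝ) (σ : ℕ → Tm F ar ℕ) (t : Tm F ar ℕ) {Δ : ℝ}
    (hΔ : 0 ≤ Δ) :
    C.evalA α (t.subst σ) Δ = C.evalA (fun Δ' x => C.evalA α (σ x) (max Δ' 0)) t Δ := by
  induction t generalizing Δ with
  | var x => simp [Tm.subst, evalA, max_eq_left hΔ]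
  | fn f ts ih =>
    simp only [Tm.subst, evalA]
    congr 1
    funext j
    exact ih j (C.par_nonneg hΔ)

theorem evalA_add_le_of_rew {R : Set (Tm F ar ℕ × Tm F ar ℕ)} (hcompat : C.Compat R)
    {s t : Tm F ar ℕ} (hst : Rew R s t) {Δ : ℝ} (hΔ : 0 < Δ) {α : ℝ → ℕ → ℝ}
    (hα : ∀ Δ' x, 0 ≤ α Δ' x) : C.evalA α t Δ + Δ ≤ C.evalA α s Δ := by
  induction hst generalizing Δ with
  | @rule l r σ hlr =>
    have := hcompat (l, r) hlr Δ hΔ _ fun Δ' x => C.evalA_nonneg hα (σ x) (le_max_right Δ' 0)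
    rw [C.evalA_subst α σ l hΔ.le, C.evalA_subst α σ r hΔ.le]
    linarith
  | @congr f ts i t' _ ih =>
    have hupdate : (fun j => C.evalA α (Function.update ts i t' j) (C.par f j Δ)) =
        Function.update (fun j => C.evalA α (ts j) (C.par f j Δ)) i
          (C.evalA α t' (C.par f i Δ)) := by
      funext j
      rcases eq_or_ne j i with rfl | hj <;> simp [*]
    have hdrop : ((C.a f i : ℝ) + C.b f i * Δ) *
        (C.evalA α t' (C.par f i Δ) - C.evalA α (ts i) (C.par f i Δ)) ≤ -Δ :=
      calc _ ≤ ((C.a f i : ℝ) + C.b f i * Δ) * -C.par f i Δ :=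
            mul_le_mul_of_nonneg_left (by linarith [ih (C.par_pos (i := i) hΔ)])
              (C.coef_pos hΔ).le
        _ = -Δ := by rw [mul_neg, C.coef_mul_par hΔ]
    simp only [evalA]
    rw [hupdate, C.fA_update]
    linarith

theorem evalA_le_pow {K : ℕ} (hK : 1 ≤ K) (hweight : ∀ f, C.weight f ≤ K) (t : Tm F ar ℕ)
    {Δ : ℝ} (hΔ0 : 0 ≤ Δ) (hΔ1 : Δ ≤ 1) :
    C.evalA (fun _ _ => 0) t Δ ≤ (K : ℝ) ^ t.size := by
  have hK' : (1 : ℝ) ≤ K := by exact_mod_cast hK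
  induction t generalizing Δ with
  | var x =>
    simp only [evalA, Tm.size]
    positivity
  | fn f ts ih =>
    set S := ∑ j, (ts j).size
    have hargs : ∀ j, C.evalA (fun _ _ => 0) (ts j) (C.par f j Δ) ≤ (K : ℝ) ^ S := fun j =>
      calc C.evalA (fun _ _ => 0) (ts j) (C.par f j Δ) ≤ (K : ℝ) ^ (ts j).size :=
            ih j (C.par_nonneg hΔ0) (C.par_le_one hΔ0 hΔ1)
        _ ≤ (K : ℝ) ^ S := pow_le_pow_right₀ hK' <|
            Finset.single_le_sum (f := fun k => (ts k).size) (by simp) (Finset.mem_univ j)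
    calc C.evalA (fun _ _ => 0) (Tm.fn f ts) Δ ≤ C.weight f * (K : ℝ) ^ S :=
          C.fA_le_weight_mul hΔ1 (one_le_pow₀ hK')
            (fun j => C.evalA_nonneg (fun _ _ => le_rfl) _ (C.par_nonneg hΔ0)) hargs
      _ ≤ K * (K : ℝ) ^ S := by gcongr; exact_mod_cast hweight f
      _ = (K : ℝ) ^ (Tm.fn f ts).size := by rw [Tm.size, pow_add, pow_one]

end DeltaLin

theorem deltaLin_exponential_general {F : Type} [Finite F] {ar : F → ℕ}
    (R : Set (Tm F ar ℕ × Tm F ar ℕ))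
    (C : DeltaLin F ar) (hcompat : C.Compat R) :
    (¬ ∃ d : ℕ → Tm F ar ℕ, ∀ i, Rew R (d i) (d (i + 1))) ∧
    ∃ c : ℕ, ∀ (t : Tm F ar ℕ) (m : ℕ) (d : ℕ → Tm F ar ℕ),
      d 0 = t → ChainOf (Rew R) m d → m ≤ 2 ^ (c * Tm.size t) := by
  let φ : Tm F ar ℕ → ℝ := fun t => C.evalA (fun _ _ => 0) t 1
  have hφ : ∀ t, 0 ≤ φ t := fun t => C.evalA_nonneg (fun _ _ => le_rfl) t zero_le_one
  have hstep : ∀ s t, Rew R s t → φ t + 1 ≤ φ s := fun _ _ hst =>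
    C.evalA_add_le_of_rew hcompat hst one_pos fun _ _ => le_rfl
  refine ⟨not_exists_infinite_chain φ hφ hstep, ?_⟩
  obtain ⟨M, hM⟩ := Finite.exists_le C.weight
  refine ⟨M + 1, fun t m d hd0 hd => ?_⟩
  have hm : (m : ℝ) ≤ ((M + 1 : ℕ) : ℝ) ^ t.size := hd0 ▸ (hd.length_le φ hφ hstep).trans
    (C.evalA_le_pow (by omega) (fun f => (hM f).trans (by omega)) _ zero_le_one le_rfl)
  calc m ≤ (M + 1) ^ t.size := by exact_mod_cast hm
    _ ≤ (2 ^ (M + 1)) ^ t.size := Nat.pow_le_pow_left Nat.lt_two_pow_self.le _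
    _ = 2 ^ ((M + 1) * t.size) := (pow_mul _ _ _).symm

/-- If a TRS `R` over a finite signature is compatible with a
Δ-linear interpretation, then `R` is terminating and there is a constant `c ∈ ℕ` such
that every `→_R`-derivation starting from a term `t` has length at most `2^{c·|t|}`. -/
theorem deltaLin_exponential {F : Type} [Finite F] {ar : F → ℕ}
    (R : Set (Tm F ar ℕ × Tm F ar ℕ)) (hTRS : IsTRS R)
    (C : DeltaLin F ar) (hcompat : C.Compat R) :
    (¬ ∃ d : ℕ → Tm F ar ℕ, ∀ i, Rew R (d i) (d (i + 1))) ∧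
    ∃ c : ℕ, ∀ (t : Tm F ar ℕ) (m : ℕ) (d : ℕ → Tm F ar ℕ),
      d 0 = t → ChainOf (Rew R) m d → m ≤ 2 ^ (c * Tm.size t) :=
  deltaLin_exponential_general R C hcompat
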